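/- arXiv:1603.08649 — 4 statements merged into one kernel-verified Lean document; each statement's English description precedes it below -/
import Mathlib

section
/- Let R, q, γ, c be real numbers with R > 0. Then the following three conditions hold simultaneously: (i) |q| ≤ R, (ii) γ = |c|, and (iii) the normality rule (q = R implies c ≥ 0, q = −R implies c ≤ 0, and |q| < R implies c = 0), if and only if the second-order cone complementarity conditions hold: R ≥ |q|, γ ≥ |c|, and R·γ − q·c = 0. -/
/-- equivalence between the yield condition, plastic-multiplier
definition and normality rule, and the second-order cone complementarity
conditions. -/
theorem yield_normality_iff_socc (R q γ c : ℝ) (hR : 0 < R) :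
    (|q| ≤ R ∧ γ = |c| ∧
      ((q = R → 0 ≤ c) ∧ (q = -R → c ≤ 0) ∧ (|q| < R → c = 0)))
    ↔ (R ≥ |q| ∧ γ ≥ |c| ∧ R * γ - q * c = 0) := by
  constructor
  · rintro ⟨h1, h2, hR', hL, hI⟩
    refine ⟨h1, h2.ge, ?_⟩
    rcases lt_or_eq_of_le h1 with h | h
    · have hc := hI h
      subst hc
      simp [h2]
    · rcases abs_eq hR.le |>.mp h with hq | hq
      · have hc := hR' hq
        rw [h2, abs_of_nonneg hc, hq]; ring
      · have hc := hL hq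
        rw [h2, abs_of_nonpos hc, hq]; ring
  · rintro ⟨h1, h2, h3⟩
    have hqc : q * c ≤ |q| * |c| := by
      calc q * c ≤ |q * c| := le_abs_self _
        _ = |q| * |c| := abs_mul q c
    have h4 : |q| * |c| ≤ R * |c| := by
      apply mul_le_mul_of_nonneg_right h1 (abs_nonneg c)
    have h5 : R * |c| ≤ R * γ := mul_le_mul_of_nonneg_left h2 hR.le
    have heq : R * |c| = R * γ := by nlinarith
    have hγ : γ = |c| := by
      have := mul_left_cancel₀ hR.ne' heq
      exact this.symm
    have hqq : q * c = R * |c| := by nlinarith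
    refine ⟨h1, hγ, ?_, ?_, ?_⟩
    · intro hq; subst hq
      nlinarith [abs_nonneg c, le_abs_self c, neg_abs_le c]
    · intro hq; subst hq
      nlinarith [abs_nonneg c, le_abs_self c, neg_abs_le c]
    · intro hlt
      by_contra hc
      have hcpos : 0 < |c| := abs_pos.mpr hc
      nlinarith [le_abs_self (q*c), abs_mul q c]
end

section
/- Let R, R^s, η, γ, c be real numbers with R > 0, R^s > 0 and η > 0. Then the second-order cone complementarity conditions R^s + η·γ ≥ |R|, γ ≥ |c|, and (R^s + η·γ)·γ − R·c = 0 hold if and only if the following disjunctive conditions hold: if R ≤ R^s then γ = 0 and c = 0, while if R > R^s then c ≥ 0, γ = c (so γ = |c|), and R = R^s + η·γ. -/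
/-- second-order cone complementarity characterization for the
piecewise-linear hardening branch. -/
theorem socc_iff_piecewise_branch (R Rs η γ c : ℝ)
    (hR : 0 < R) (hRs : 0 < Rs) (hη : 0 < η) :
    (Rs + η * γ ≥ |R| ∧ γ ≥ |c| ∧ (Rs + η * γ) * γ - R * c = 0)
    ↔ ((R ≤ Rs → γ = 0 ∧ c = 0) ∧
       (R > Rs → 0 ≤ c ∧ γ = c ∧ R = Rs + η * γ)) := by
  constructor
  · rintro ⟨h1, h2, h3⟩
    rw [abs_of_pos hR] at h1
    have hγ0 : 0 ≤ γ := le_trans (abs_nonneg c) h2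
    rcases eq_or_lt_of_le hγ0 with hγ | hγ
    · have hc : c = 0 := by
        have := h2; rw [← hγ] at this
        have := abs_nonpos_iff.mp this; exact this
      constructor
      · intro _; exact ⟨hγ.symm, hc⟩
      · intro hRRs
        exfalso
        rw [← hγ] at h1; simp at h1
        linarith
    · -- γ > 0
      have key : R * c ≤ R * |c| := by
        have := le_abs_self c
        nlinarith
      have key2 : R * |c| ≤ R * γ := by nlinarith
      have key3 : R * γ ≤ (Rs + η * γ) * γ := by nlinarith
      have heq : (Rs + η * γ) * γ = R * c := by linarith
      have e1 : R * c = R * |c| := by linarith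
      have e2 : R * |c| = R * γ := by linarith
      have e3 : R * γ = (Rs + η * γ) * γ := by linarith
      have hcabs : c = |c| := by
        have := mul_left_cancel₀ (ne_of_gt hR) e1; exact this
      have hcγ : |c| = γ := mul_left_cancel₀ (ne_of_gt hR) e2
      have hRe : R = Rs + η * γ := by
        have := mul_right_cancel₀ (ne_of_gt hγ) e3; exact this
      have hRgt : R > Rs := by nlinarith
      constructor
      · intro hle; exact absurd hle (not_le.mpr hRgt)
      · intro _
        refine ⟨?_, ?_, hRe⟩
        · rw [hcabs]; exact abs_nonneg c
        · rw [← hcγ, ← hcabs]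
  · rintro ⟨hle, hgt⟩
    rcases le_or_gt R Rs with h | h
    · obtain ⟨hγ, hc⟩ := hle h
      subst hγ; subst hc
      rw [abs_of_pos hR]
      simp
      exact h
    · obtain ⟨hc, hγc, hRe⟩ := hgt h
      rw [abs_of_pos hR, abs_of_nonneg hc]
      refine ⟨le_of_eq hRe, le_of_eq hγc.symm, ?_⟩
      rw [← hγc, ← hRe]; ring
end

section
/- Consider problem (P1) with data k_i > 0, h_i > 0, R_i > 0, q_i ∈ ℝ (i = 1,…,m), b_1,…,b_m ∈ ℝ^d, f ∈ ℝ^d. Then every global optimal solution (u, c_e, c_p, γ) of (P1) satisfies γ_i = |c_{p,i}| for all i = 1,…,m; that is, all the inequality constraints γ_i ≥ |c_{p,i}| are active at any optimal solution. -/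
open Finset

/-- Feasibility for problem (P1). -/
def P1Feasible (m d : ℕ) (b : Fin m → Fin d → ℝ)
    (u : Fin d → ℝ) (ce cp γ : Fin m → ℝ) : Prop :=
  (∀ i, ce i + cp i = ∑ j, b i j * u j) ∧ (∀ i, γ i ≥ |cp i|)

/-- Objective of problem (P1). -/
noncomputable def P1Obj (m d : ℕ) (k h R q : Fin m → ℝ) (f : Fin d → ℝ)
    (u : Fin d → ℝ) (ce cp γ : Fin m → ℝ) : ℝ :=
  (∑ i, (q i * ce i + (1/2) * k i * (ce i)^2))
    + (∑ i, (R i * γ i + (1/2) * h i * (γ i)^2))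
    - ∑ j, f j * u j

/-- at every global optimal solution of (P1), all inequality
constraints `γᵢ ≥ |c_{p,i}|` are active. -/
theorem P1_optimal_gamma_eq_abs (m d : ℕ) (k h R q : Fin m → ℝ)
    (hk : ∀ i, 0 < k i) (hh : ∀ i, 0 < h i) (hR : ∀ i, 0 < R i)
    (b : Fin m → Fin d → ℝ) (f : Fin d → ℝ)
    (u : Fin d → ℝ) (ce cp γ : Fin m → ℝ)
    (hfeas : P1Feasible m d b u ce cp γ)
    (hopt : ∀ (u' : Fin d → ℝ) (ce' cp' γ' : Fin m → ℝ),
      P1Feasible m d b u' ce' cp' γ' →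
      P1Obj m d k h R q f u ce cp γ ≤ P1Obj m d k h R q f u' ce' cp' γ') :
    ∀ i, γ i = |cp i| := by
  intro i
  by_contra hne
  have hge := hfeas.2 i
  have hlt : |cp i| < γ i := lt_of_le_of_ne hge (Ne.symm (by simpa using hne))
  set γ' : Fin m → ℝ := Function.update γ i |cp i| with hγ'
  have hfeas' : P1Feasible m d b u ce cp γ' := by
    refine ⟨hfeas.1, fun j => ?_⟩
    by_cases hj : j = i
    · subst hj; simp [hγ']
    · simp [hγ', Function.update_of_ne hj]; exact hfeas.2 j
  have hle := hopt u ce cp γ' hfeas'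
  have hsum : ∑ j, (R j * γ' j + (1/2) * h j * (γ' j)^2)
      < ∑ j, (R j * γ j + (1/2) * h j * (γ j)^2) := by
    refine Finset.sum_lt_sum (fun j _ => ?_) ⟨i, Finset.mem_univ i, ?_⟩
    · by_cases hj : j = i
      · subst hj
        simp only [hγ', Function.update_self]
        have h0 : (0:ℝ) ≤ |cp j| := abs_nonneg _
        have h1 : |cp j|^2 = (cp j)^2 := sq_abs _
        nlinarith [mul_pos (hR j) (sub_pos.mpr hlt), mul_nonneg (hh j).le (mul_nonneg (sub_nonneg.mpr hlt.le) (by linarith : (0:ℝ) ≤ γ j + |cp j|))]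
      · simp [hγ', Function.update_of_ne hj]
    · simp only [hγ', Function.update_self]
      have h0 : (0:ℝ) ≤ |cp i| := abs_nonneg _
      have h1 : |cp i|^2 = (cp i)^2 := sq_abs _
      nlinarith [mul_pos (hR i) (sub_pos.mpr hlt), mul_nonneg (hh i).le (mul_nonneg (sub_nonneg.mpr hlt.le) (by linarith : (0:ℝ) ≤ γ i + |cp i|))]
  have : P1Obj m d k h R q f u ce cp γ' < P1Obj m d k h R q f u ce cp γ := by
    unfold P1Obj
    linarith
  linarith
end

section
/- Let k_i > 0, h_i > 0, R_i > 0, q_i ∈ ℝ (i = 1,…,m), b_1,…,b_m ∈ ℝ^d, f ∈ ℝ^d. A tuple (u, c_e, c_p, γ, Q) ∈ ℝ^d × ℝ^m × ℝ^m × ℝ^m × ℝ^m satisfies the second-order cone linear complementarity system: (a) c_{e,i} + c_{p,i} = b_iᵀu for all i; (b) Q_i = q_i + k_i c_{e,i} for all i; (c) Σ_{i=1}^m Q_i b_i = f; (d) R_i + h_i γ_i ≥ |Q_i|, γ_i ≥ |c_{p,i}|, and (R_i + h_i γ_i)·γ_i − Q_i·c_{p,i} = 0 for all i; if and only if (u,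 c_e, c_p, γ) is a global optimal solution of problem (P1) and Q is given by (b). -/
open Finset

private lemma quad_aux (α β : ℝ) (hβ : 0 ≤ β)
    (H : ∀ ε : ℝ, 0 < ε → ε ≤ 1 → 0 ≤ α * ε + β * ε ^ 2) : 0 ≤ α := by
  by_contra hα
  push_neg at hα
  have h2 : (0:ℝ) < 2 * (β + 1) := by linarith
  set ε := min 1 (-α / (2 * (β + 1))) with hεdef
  have hεpos : 0 < ε := lt_min one_pos (div_pos (by linarith) h2)
  have hε1 : ε ≤ 1 := min_le_left _ _
  have hεle : ε ≤ -α / (2 * (β + 1)) := min_le_right _ _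
  have h3 : β * ε ≤ β * (-α / (2 * (β + 1))) := mul_le_mul_of_nonneg_left hεle hβ
  have h4 : β * (-α / (2 * (β + 1))) < -α := by
    have hlt : β / (2 * (β + 1)) < 1 := (div_lt_one h2).mpr (by linarith)
    calc β * (-α / (2 * (β + 1))) = (β / (2 * (β + 1))) * (-α) := by ring
      _ < 1 * (-α) := mul_lt_mul_of_pos_right hlt (by linarith)
      _ = -α := one_mul _
  have h5 := H ε hεpos hε1
  nlinarith [mul_pos hεpos (show (0:ℝ) < -(α + β * ε) by linarith)]

private lemma sum_update_eq {ι : Type*} [Fintype ι] [DecidableEq ι]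
    (g : ι → ℝ → ℝ) (x : ι → ℝ) (i : ι) (v : ℝ) :
    (∑ i', g i' (Function.update x i v i'))
      = (∑ i', g i' (x i')) + (g i v - g i (x i)) := by
  rw [← Finset.sum_erase_add _ _ (Finset.mem_univ i),
      ← Finset.sum_erase_add _ (fun i' => g i' (x i')) (Finset.mem_univ i)]
  have h : ∀ i' ∈ Finset.univ.erase i, g i' (Function.update x i v i') = g i' (x i') :=
    fun i' hi' => by rw [Function.update_of_ne (Finset.ne_of_mem_erase hi')]
  rw [Finset.sum_congr rfl h, Function.update_self]
  ring

/-- the second-order cone linear complementarity system (a)–(d)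
of the incremental elastoplastic problem holds iff `(u, c_e, c_p, γ)` is a
global optimal solution of (P1) and `Q` is given by the constitutive law (b). -/
theorem soclcp_iff_P1_optimal (m d : ℕ) (k h R q : Fin m → ℝ)
    (hk : ∀ i, 0 < k i) (hh : ∀ i, 0 < h i) (hR : ∀ i, 0 < R i)
    (b : Fin m → Fin d → ℝ) (f : Fin d → ℝ)
    (u : Fin d → ℝ) (ce cp γ Q : Fin m → ℝ) :
    ((∀ i, ce i + cp i = ∑ j, b i j * u j)
      ∧ (∀ i, Q i = q i + k i * ce i)
      ∧ (∀ j, ∑ i, Q i * b i j = f j)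
      ∧ (∀ i, R i + h i * γ i ≥ |Q i| ∧ γ i ≥ |cp i|
          ∧ (R i + h i * γ i) * γ i - Q i * cp i = 0))
    ↔ ((P1Feasible m d b u ce cp γ ∧
          ∀ (u' : Fin d → ℝ) (ce' cp' γ' : Fin m → ℝ),
            P1Feasible m d b u' ce' cp' γ' →
            P1Obj m d k h R q f u ce cp γ ≤ P1Obj m d k h R q f u' ce' cp' γ')
        ∧ (∀ i, Q i = q i + k i * ce i)) := by
  constructor
  · rintro ⟨ha, hb, hc, hd⟩
    refine ⟨⟨⟨ha, fun i => (hd i).2.1⟩, ?_⟩, hb⟩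
    rintro u' ce' cp' γ' ⟨ha', hg'⟩
    rw [← sub_nonneg]
    have hf : ∀ v : Fin d → ℝ, ∑ j, f j * v j = ∑ i, Q i * (∑ j, b i j * v j) := by
      intro v
      calc ∑ j, f j * v j = ∑ j, (∑ i, Q i * b i j) * v j :=
            Finset.sum_congr rfl fun j _ => by rw [hc j]
        _ = ∑ j, ∑ i, Q i * b i j * v j :=
            Finset.sum_congr rfl fun j _ => Finset.sum_mul _ _ _
        _ = ∑ i, ∑ j, Q i * b i j * v j := Finset.sum_comm
        _ = ∑ i, Q i * (∑ j, b i j * v j) := Finset.sum_congr rfl fun i _ => by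
              rw [Finset.mul_sum]; exact Finset.sum_congr rfl fun j _ => by ring
    have e1 : ∑ i, Q i * (∑ j, b i j * u' j) = ∑ i, Q i * (ce' i + cp' i) :=
      Finset.sum_congr rfl fun i _ => by rw [← ha' i]
    have e2 : ∑ i, Q i * (∑ j, b i j * u j) = ∑ i, Q i * (ce i + cp i) :=
      Finset.sum_congr rfl fun i _ => by rw [← ha i]
    have key : P1Obj m d k h R q f u' ce' cp' γ' - P1Obj m d k h R q f u ce cp γ
        = ∑ i, ((q i * ce' i + 1/2 * k i * (ce' i)^2 + R i * γ' i + 1/2 * h i * (γ' i)^2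
                - Q i * (ce' i + cp' i))
              - (q i * ce i + 1/2 * k i * (ce i)^2 + R i * γ i + 1/2 * h i * (γ i)^2
                - Q i * (ce i + cp i))) := by
      unfold P1Obj
      rw [hf u', hf u, e1, e2]
      simp only [Finset.sum_sub_distrib, Finset.sum_add_distrib]
      ring
    rw [key]
    apply Finset.sum_nonneg
    intro i _
    obtain ⟨hd1, hd2, hd3⟩ := hd i
    have hQ := hb i
    have hγ'0 : 0 ≤ γ' i := le_trans (abs_nonneg _) (hg' i)
    have h5 : Q i * cp' i ≤ |Q i| * γ' i :=
      calc Q i * cp' i ≤ |Q i * cp' i| := le_abs_self _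
        _ = |Q i| * |cp' i| := abs_mul _ _
        _ ≤ |Q i| * γ' i := mul_le_mul_of_nonneg_left (hg' i) (abs_nonneg _)
    have h6 : |Q i| * γ' i ≤ (R i + h i * γ i) * γ' i :=
      mul_le_mul_of_nonneg_right hd1 hγ'0
    have hT : (q i * ce' i + 1 / 2 * k i * ce' i ^ 2 + R i * γ' i + 1 / 2 * h i * γ' i ^ 2
            - Q i * (ce' i + cp' i))
          - (q i * ce i + 1 / 2 * k i * ce i ^ 2 + R i * γ i + 1 / 2 * h i * γ i ^ 2
            - Q i * (ce i + cp i))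
        = 1/2 * k i * (ce' i - ce i)^2 + 1/2 * h i * (γ' i - γ i)^2
          + ((R i + h i * γ i) * γ' i - Q i * cp' i)
          - ((R i + h i * γ i) * γ i - Q i * cp i) := by
      rw [hQ]; ring
    linarith [hT, h5, h6, hd3,
              mul_nonneg (le_of_lt (hk i)) (sq_nonneg (ce' i - ce i)),
              mul_nonneg (le_of_lt (hh i)) (sq_nonneg (γ' i - γ i))]
  · rintro ⟨⟨⟨ha, hg⟩, hopt⟩, hb⟩
    -- a general variation lemma at index i
    have hvar : ∀ i : Fin m, ∀ s t : ℝ, |cp i + s| ≤ γ i + t →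
        0 ≤ (-(Q i)) * s + 1/2 * k i * s^2 + (R i + h i * γ i) * t + 1/2 * h i * t^2 := by
      intro i s t hst
      have hfeas' : P1Feasible m d b u (Function.update ce i (ce i - s))
          (Function.update cp i (cp i + s)) (Function.update γ i (γ i + t)) := by
        constructor
        · intro i'
          by_cases hii : i' = i
          · subst hii
            simp only [Function.update_self]
            have := ha i'
            linarith
          · simp only [Function.update_of_ne hii]; exact ha i'
        · intro i'
          by_cases hii : i' = i
          · subst hii
            simpa only [Function.update_self, ge_iff_le] using hst
          · simp only [Function.update_of_ne hii]; exact hg i'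
      have hle := hopt _ _ _ _ hfeas'
      have eA := sum_update_eq (fun i' x => q i' * x + 1/2 * k i' * x^2) ce i (ce i - s)
      have eB := sum_update_eq (fun i' x => R i' * x + 1/2 * h i' * x^2) γ i (γ i + t)
      have hdiff : P1Obj m d k h R q f u (Function.update ce i (ce i - s))
          (Function.update cp i (cp i + s)) (Function.update γ i (γ i + t))
          = P1Obj m d k h R q f u ce cp γ
            + ((-(Q i)) * s + 1/2 * k i * s^2 + (R i + h i * γ i) * t + 1/2 * h i * t^2) := by
        unfold P1Obj
        rw [eA, eB, hb i]
        ring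
      rw [hdiff] at hle
      linarith
    refine ⟨ha, hb, ?_, ?_⟩
    · -- equilibrium (c)
      intro j
      set β := ∑ i, 1/2 * k i * (b i j)^2 with hβdef
      have hβ : 0 ≤ β := Finset.sum_nonneg fun i _ =>
        mul_nonneg (by linarith [(hk i).le]) (sq_nonneg _)
      set α := (∑ i, Q i * b i j) - f j with hα
      have H : ∀ t : ℝ, 0 ≤ α * t + β * t^2 := by
        intro t
        have hfeas' : P1Feasible m d b (fun j' => u j' + if j' = j then t else 0)
            (fun i => ce i + t * b i j) cp γ := by
          constructor
          · intro i
            have e : ∑ j', b i j' * (u j' + if j' = j then t else 0)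
                = (∑ j', b i j' * u j') + b i j * t := by
              simp only [mul_add, Finset.sum_add_distrib, mul_ite, mul_zero]
              rw [Finset.sum_ite_eq' Finset.univ j (fun j' => b i j' * t)]
              simp
            rw [e, ← ha i]; ring
          · exact hg
        have hle := hopt _ _ _ _ hfeas'
        have hdiff : P1Obj m d k h R q f (fun j' => u j' + if j' = j then t else 0)
            (fun i => ce i + t * b i j) cp γ
            = P1Obj m d k h R q f u ce cp γ + (α * t + β * t^2) := by
          unfold P1Obj
          have eA : ∑ i, (q i * (ce i + t * b i j) + 1/2 * k i * (ce i + t * b i j)^2)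
              = (∑ i, (q i * ce i + 1/2 * k i * (ce i)^2))
                + t * (∑ i, (q i + k i * ce i) * b i j)
                + t^2 * (∑ i, 1/2 * k i * (b i j)^2) := by
            rw [Finset.mul_sum, Finset.mul_sum, ← Finset.sum_add_distrib,
                ← Finset.sum_add_distrib]
            exact Finset.sum_congr rfl fun i _ => by ring
          have eF : ∑ j', f j' * (u j' + if j' = j then t else 0)
              = (∑ j', f j' * u j') + f j * t := by
            simp only [mul_add, Finset.sum_add_distrib, mul_ite, mul_zero]
            rw [Finset.sum_ite_eq' Finset.univ j (fun j' => f j' * t)]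
            simp
          have eQ : ∑ i, (q i + k i * ce i) * b i j = ∑ i, Q i * b i j :=
            Finset.sum_congr rfl fun i _ => by rw [hb i]
          rw [eA, eF, eQ, hα, hβdef]
          ring
        rw [hdiff] at hle
        linarith
      have h1 : 0 ≤ α := quad_aux _ _ hβ fun ε hε _ => H ε
      have h2 : 0 ≤ -α := quad_aux _ _ hβ fun ε hε _ => by
        have := H (-ε); nlinarith [this]
      have : α = 0 := by linarith
      rw [hα] at this
      linarith
    · -- complementarity (d)
      intro i
      have hcp0 : 0 ≤ γ i := le_trans (abs_nonneg _) (hg i)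
      -- first: |Q i| ≤ R i + h i * γ i
      have hd1 : |Q i| ≤ R i + h i * γ i := by
        have hβ : 0 ≤ 1/2 * k i + 1/2 * h i := by linarith [(hk i).le, (hh i).le]
        rcases le_or_gt 0 (Q i) with h0 | h0
        · rw [abs_of_nonneg h0]
          have := quad_aux (R i + h i * γ i - Q i) (1/2 * k i + 1/2 * h i) hβ ?_
          · linarith
          intro ε hε hε1
          have habs : |cp i + ε| ≤ γ i + ε := by
            calc |cp i + ε| ≤ |cp i| + |ε| := abs_add_le _ _
              _ = |cp i| + ε := by rw [abs_of_pos hε]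
              _ ≤ γ i + ε := by linarith [hg i]
          have := hvar i ε ε habs
          nlinarith [this]
        · rw [abs_of_neg h0]
          have := quad_aux (R i + h i * γ i + Q i) (1/2 * k i + 1/2 * h i) hβ ?_
          · linarith
          intro ε hε hε1
          have habs : |cp i + (-ε)| ≤ γ i + ε := by
            calc |cp i + (-ε)| ≤ |cp i| + |(-ε)| := abs_add_le _ _
              _ = |cp i| + ε := by rw [abs_neg, abs_of_pos hε]
              _ ≤ γ i + ε := by linarith [hg i]
          have := hvar i (-ε) ε habs
          nlinarith [this]
      refine ⟨hd1, hg i, ?_⟩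
      have hz1 : Q i * cp i ≤ (R i + h i * γ i) * γ i := by
        have hQ0 : 0 ≤ |Q i| := abs_nonneg _
        calc Q i * cp i ≤ |Q i * cp i| := le_abs_self _
          _ = |Q i| * |cp i| := abs_mul _ _
          _ ≤ (R i + h i * γ i) * γ i :=
            mul_le_mul hd1 (hg i) (abs_nonneg _) (le_trans hQ0 hd1)
      have hz2 : 0 ≤ -((R i + h i * γ i) * γ i - Q i * cp i) := by
        have hβ : 0 ≤ 1/2 * k i * (cp i)^2 + 1/2 * h i * (γ i)^2 := by
          have := mul_nonneg (by linarith [(hk i).le] : (0:ℝ) ≤ 1/2 * k i) (sq_nonneg (cp i))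
          have := mul_nonneg (by linarith [(hh i).le] : (0:ℝ) ≤ 1/2 * h i) (sq_nonneg (γ i))
          linarith
        apply quad_aux _ _ hβ
        intro ε hε hε1
        have habs : |cp i + (-ε * cp i)| ≤ γ i + (-ε * γ i) := by
          have e : cp i + (-ε * cp i) = (1 - ε) * cp i := by ring
          rw [e, abs_mul, abs_of_nonneg (by linarith : (0:ℝ) ≤ 1 - ε)]
          have := mul_le_mul_of_nonneg_left (hg i) (by linarith : (0:ℝ) ≤ 1 - ε)
          nlinarith [this]
        have := hvar i (-ε * cp i) (-ε * γ i) habs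
        nlinarith [this]
      linarith
end
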